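/- arXiv:1403.5704 — 7 statements merged into one kernel-verified Lean document; each statement's English description precedes it below -/
import Mathlib

section
/- Let H₁ and H₂ be invertible Hermitian n×n complex matrices with H₁ ≤ H₂ (i.e. H₂ - H₁ is positive semidefinite). Then H₂⁻¹ ≤ H₁⁻¹ if and only if H₁ and H₂ have the same number of negative eigenvalues (counted with multiplicity). -/
open Matrix ComplexOrder

/-- Number of strictly negative eigenvalues (with multiplicity) of a matrix,
interpreted via its Hermitian spectral decomposition (0 if not Hermitian). -/
noncomputable def negCount {n : ℕ} (A : Matrix (Fin n) (Fin n) ℂ) : ℕ :=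
  if h : A.IsHermitian then Fintype.card {i // h.eigenvalues i < 0} else 0

/-- Number of strictly positive eigenvalues. -/
noncomputable def posCount {n : ℕ} (A : Matrix (Fin n) (Fin n) ℂ) : ℕ :=
  if h : A.IsHermitian then Fintype.card {i // 0 < h.eigenvalues i} else 0

/-- Number of nonpositive eigenvalues. -/
noncomputable def nonposCount {n : ℕ} (A : Matrix (Fin n) (Fin n) ℂ) : ℕ :=
  if h : A.IsHermitian then Fintype.card {i // h.eigenvalues i ≤ 0} else 0

/-- Number of nonnegative eigenvalues. -/
noncomputable def nonnegCount {n : ℕ} (A : Matrix (Fin n) (Fin n) ℂ) : ℕ :=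
  if h : A.IsHermitian then Fintype.card {i // 0 ≤ h.eigenvalues i} else 0

/-- Number of zero eigenvalues. -/
noncomputable def zeroCount {n : ℕ} (A : Matrix (Fin n) (Fin n) ℂ) : ℕ :=
  if h : A.IsHermitian then Fintype.card {i // h.eigenvalues i = 0} else 0

/-!
The number `ν(A)` of negative eigenvalues of a Hermitian matrix `A` is the largest dimension of
a subspace on which `x ↦ xᴴ A x` is negative definite; such a subspace is the column space of a
matrix `F` with `(-(Fᴴ * A * F)).PosDef`. Hence `ν` is antitone for the Loewner order and
invariant under congruence (Sylvester's law of inertia), in particular under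
`A ↦ A⁻¹ = (A⁻¹)ᴴ A A⁻¹`; this gives the forward implication.

For the converse write `H₂ = H₁ + Bᴴ B`. The two Schur complement factorizations of the block
matrix `[[H₁, Bᴴ], [B, -1]]` give `ν(H₁) + ν(-(1 + B H₁⁻¹ Bᴴ)) = ν(H₂) + n`, so `ν(H₁) = ν(H₂)`
forces `1 + B H₁⁻¹ Bᴴ` to be positive definite, and the Woodbury identity writes
`H₁⁻¹ - H₂⁻¹ = (B H₁⁻¹)ᴴ (1 + B H₁⁻¹ Bᴴ)⁻¹ (B H₁⁻¹)`.
-/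

namespace Matrix

variable {𝕜 ι κ : Type*} [RCLike 𝕜] [Fintype ι]

lemma star_mulVec_dotProduct_mulVec [Fintype κ] (A : Matrix ι ι 𝕜) (F : Matrix ι κ 𝕜)
    (y : κ → 𝕜) : star (F *ᵥ y) ⬝ᵥ A *ᵥ (F *ᵥ y) = star y ⬝ᵥ (Fᴴ * A * F) *ᵥ y := by
  simp only [star_mulVec, dotProduct_mulVec, vecMul_vecMul]

/-- `fromCols F G` is injective: the column spaces of `F` and `G` meet only in `0`. -/
lemma card_add_card_le_of_negDef_of_posSemidef {κ₁ κ₂ : Type*} [Fintype κ₁] [Fintype κ₂]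
    {A : Matrix ι ι 𝕜} {F : Matrix ι κ₁ 𝕜} {G : Matrix ι κ₂ 𝕜} (hF : (-(Fᴴ * A * F)).PosDef)
    (hG : (Gᴴ * A * G).PosSemidef) (hG_inj : Function.Injective G.mulVec) :
    Fintype.card κ₁ + Fintype.card κ₂ ≤ Fintype.card ι := by
  have hF_zero : ∀ a b, F *ᵥ a + G *ᵥ b = 0 → a = 0 := by
    intro a b hab
    by_contra ha
    have hneg := hF.dotProduct_mulVec_pos ha
    have hnn := hG.dotProduct_mulVec_nonneg (-b)
    rw [neg_mulVec, dotProduct_neg, neg_pos] at hneg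
    rw [← star_mulVec_dotProduct_mulVec, mulVec_neg, ← eq_neg_of_add_eq_zero_left hab,
      star_mulVec_dotProduct_mulVec] at hnn
    exact hneg.not_ge hnn
  have hinj : Function.Injective (fromCols F G).mulVecLin := by
    rw [← LinearMap.ker_eq_bot, LinearMap.ker_eq_bot']
    intro v hv
    rw [mulVecLin_apply, fromCols_mulVec] at hv
    have hl := hF_zero _ _ hv
    have hr : v ∘ Sum.inr = 0 :=
      hG_inj <| by rwa [hl, mulVec_zero, zero_add, ← mulVec_zero G] at hv
    ext (i | i)
    exacts [congrFun hl i, congrFun hr i]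
  simpa [Module.finrank_fintype_fun_eq_card] using LinearMap.finrank_le_finrank_of_injective hinj

lemma conjTranspose_submatrix_mul_mul_submatrix (U A : Matrix ι ι 𝕜) (f : κ → ι) :
    (U.submatrix id f)ᴴ * A * U.submatrix id f = (Uᴴ * A * U).submatrix f f := by
  rw [conjTranspose_submatrix, submatrix_mul _ _ f id f Function.bijective_id,
    submatrix_mul _ _ f id id Function.bijective_id, submatrix_id_id]

section Diagonalization

variable [DecidableEq ι] {A U : Matrix ι ι 𝕜} {d : ι → ℝ}

lemma posDef_neg_submatrix_of_conj_eq_diagonal [DecidableEq κ]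
    (hAU : Uᴴ * A * U = diagonal (RCLike.ofReal ∘ d)) {f : κ → ι} (hf : Function.Injective f)
    (hneg : ∀ j, d (f j) < 0) : (-((U.submatrix id f)ᴴ * A * U.submatrix id f)).PosDef := by
  rw [conjTranspose_submatrix_mul_mul_submatrix, hAU, submatrix_diagonal _ _ hf, diagonal_neg]
  exact posDef_diagonal_iff.mpr fun j => neg_pos.mpr (RCLike.ofReal_lt_zero.mpr (hneg j))

lemma card_le_card_neg_of_conj_eq_diagonal [Fintype κ] (hU : Uᴴ * U = 1)
    (hAU : Uᴴ * A * U = diagonal (RCLike.ofReal ∘ d)) {F : Matrix ι κ 𝕜}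
    (hF : (-(Fᴴ * A * F)).PosDef) : Fintype.card κ ≤ Fintype.card {i // d i < 0} := by
  let G := U.submatrix id (Subtype.val : {i // ¬ d i < 0} → ι)
  have hG : (Gᴴ * A * G).PosSemidef := by
    rw [conjTranspose_submatrix_mul_mul_submatrix, hAU,
      submatrix_diagonal _ _ Subtype.val_injective]
    exact posSemidef_diagonal_iff.mpr fun j => RCLike.ofReal_nonneg.mpr (not_lt.mp j.2)
  have hGG : Gᴴ * G = 1 := by
    have := conjTranspose_submatrix_mul_mul_submatrix U 1 (Subtype.val : {i // ¬ d i < 0} → ι)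
    rwa [Matrix.mul_one, Matrix.mul_one, hU, submatrix_one _ Subtype.val_injective] at this
  have hG_inj : Function.Injective G.mulVec := fun x y h => by
    simpa [mulVec_mulVec, hGG] using congrArg (Gᴴ *ᵥ ·) h
  have := card_add_card_le_of_negDef_of_posSemidef hF hG hG_inj
  have := Fintype.card_subtype_le fun i => d i < 0
  rw [Fintype.card_subtype_compl] at *
  omega

end Diagonalization

variable [DecidableEq ι] {A : Matrix ι ι 𝕜}

theorem IsHermitian.conjTranspose_eigenvectorUnitary_mul_mul (hA : A.IsHermitian) :
    (hA.eigenvectorUnitary : Matrix ι ι 𝕜)ᴴ * A * (hA.eigenvectorUnitary : Matrix ι ι 𝕜) =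
      diagonal (RCLike.ofReal ∘ hA.eigenvalues) :=
  (Unitary.conjStarAlgAut_star_apply _ _).symm.trans hA.conjStarAlgAut_star_eigenvectorUnitary

noncomputable def negInertia (A : Matrix ι ι 𝕜) : ℕ :=
  if hA : A.IsHermitian then Fintype.card {i // hA.eigenvalues i < 0} else 0

theorem IsHermitian.negInertia_eq (hA : A.IsHermitian) :
    A.negInertia = Fintype.card {i // hA.eigenvalues i < 0} :=
  dif_pos hA

theorem card_le_negInertia [Fintype κ] (hA : A.IsHermitian) {F : Matrix ι κ 𝕜}
    (hF : (-(Fᴴ * A * F)).PosDef) : Fintype.card κ ≤ A.negInertia :=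
  hA.negInertia_eq ▸ card_le_card_neg_of_conj_eq_diagonal (Unitary.coe_star_mul_self _)
    hA.conjTranspose_eigenvectorUnitary_mul_mul hF

theorem exists_negDef_negInertia (hA : A.IsHermitian) :
    ∃ F : Matrix ι (Fin A.negInertia) 𝕜, (-(Fᴴ * A * F)).PosDef := by
  let e := Fintype.equivFinOfCardEq hA.negInertia_eq.symm
  exact ⟨_, posDef_neg_submatrix_of_conj_eq_diagonal hA.conjTranspose_eigenvectorUnitary_mul_mul
    (Subtype.val_injective.comp e.symm.injective) fun j => (e.symm j).2⟩

theorem negInertia_eq_card_of_conj_eq_diagonal (hA : A.IsHermitian) {U : Matrix ι ι 𝕜}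
    {d : ι → ℝ} (hU : Uᴴ * U = 1) (hAU : Uᴴ * A * U = diagonal (RCLike.ofReal ∘ d)) :
    A.negInertia = Fintype.card {i // d i < 0} := by
  obtain ⟨F, hF⟩ := exists_negDef_negInertia hA
  refine le_antisymm ?_ ?_
  · simpa using card_le_card_neg_of_conj_eq_diagonal hU hAU hF
  · exact card_le_negInertia hA
      (posDef_neg_submatrix_of_conj_eq_diagonal hAU Subtype.val_injective fun j => j.2)

theorem negInertia_neg_one : (-1 : Matrix ι ι 𝕜).negInertia = Fintype.card ι := by
  rw [negInertia_eq_card_of_conj_eq_diagonal isHermitian_one.neg (U := 1) (d := fun _ => -1)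
    (by simp) (by simp [← diagonal_one, diagonal_neg, Function.comp_def])]
  simp

theorem negInertia_le_of_posSemidef_sub {B : Matrix ι ι 𝕜} (hA : A.IsHermitian)
    (hB : B.IsHermitian) (h : (B - A).PosSemidef) : B.negInertia ≤ A.negInertia := by
  obtain ⟨F, hF⟩ := exists_negDef_negInertia hB
  have hFA : (-(Fᴴ * A * F)).PosDef := by
    convert hF.add_posSemidef (h.conjTranspose_mul_mul_same F) using 1
    simp only [Matrix.mul_sub, Matrix.sub_mul]
    abel
  simpa using card_le_negInertia hA hFA

theorem negInertia_le_conjTranspose_mul_mul (hA : A.IsHermitian) {E : Matrix ι ι 𝕜}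
    (hE : IsUnit E) : A.negInertia ≤ (Eᴴ * A * E).negInertia := by
  obtain ⟨F, hF⟩ := exists_negDef_negInertia hA
  have hEE : E * E⁻¹ = 1 := mul_nonsing_inv E ((isUnit_iff_isUnit_det E).mp hE)
  have hconj : (E⁻¹ * F)ᴴ * (Eᴴ * A * E) * (E⁻¹ * F) = Fᴴ * A * F := by
    calc (E⁻¹ * F)ᴴ * (Eᴴ * A * E) * (E⁻¹ * F)
        = Fᴴ * (E * E⁻¹)ᴴ * A * (E * E⁻¹) * F := by
          simp only [conjTranspose_mul, Matrix.mul_assoc]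
      _ = Fᴴ * A * F := by simp [hEE]
  rw [← hconj] at hF
  simpa using card_le_negInertia (isHermitian_conjTranspose_mul_mul E hA) hF

theorem negInertia_conjTranspose_mul_mul (hA : A.IsHermitian) {E : Matrix ι ι 𝕜}
    (hE : IsUnit E) : (Eᴴ * A * E).negInertia = A.negInertia := by
  refine le_antisymm ?_ (negInertia_le_conjTranspose_mul_mul hA hE)
  have hEE : E * E⁻¹ = 1 := mul_nonsing_inv E ((isUnit_iff_isUnit_det E).mp hE)
  have hconj : (E⁻¹)ᴴ * (Eᴴ * A * E) * E⁻¹ = A := by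
    calc (E⁻¹)ᴴ * (Eᴴ * A * E) * E⁻¹ = (E * E⁻¹)ᴴ * A * (E * E⁻¹) := by
          simp only [conjTranspose_mul, Matrix.mul_assoc]
      _ = A := by simp [hEE]
  simpa [hconj] using negInertia_le_conjTranspose_mul_mul
    (isHermitian_conjTranspose_mul_mul E hA) (isUnit_nonsing_inv_iff.mpr hE)

theorem negInertia_inv (hA : A.IsHermitian) (hAu : IsUnit A) :
    A⁻¹.negInertia = A.negInertia := by
  have hA_inv : A⁻¹ = (A⁻¹)ᴴ * A * A⁻¹ := by
    rw [hA.inv.eq, Matrix.mul_assoc, mul_nonsing_inv A ((isUnit_iff_isUnit_det A).mp hAu),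
      Matrix.mul_one]
  rw [hA_inv, negInertia_conjTranspose_mul_mul hA (isUnit_nonsing_inv_iff.mpr hAu)]

section Blocks

variable [Fintype κ] [DecidableEq κ]

omit [DecidableEq ι] [DecidableEq κ] in
lemma conjTranspose_fromBlocks_mul_fromBlocks_mul_fromBlocks (U A : Matrix ι ι 𝕜)
    (V D : Matrix κ κ 𝕜) :
    (fromBlocks U 0 0 V)ᴴ * fromBlocks A 0 0 D * fromBlocks U 0 0 V =
      fromBlocks (Uᴴ * A * U) 0 0 (Vᴴ * D * V) := by
  simp [fromBlocks_conjTranspose, fromBlocks_multiply]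

theorem negInertia_fromBlocks_zero_zero {D : Matrix κ κ 𝕜} (hA : A.IsHermitian)
    (hD : D.IsHermitian) : (fromBlocks A 0 0 D).negInertia = A.negInertia + D.negInertia := by
  let U : Matrix ι ι 𝕜 := hA.eigenvectorUnitary
  let V : Matrix κ κ 𝕜 := hD.eigenvectorUnitary
  have hW : (fromBlocks U 0 0 V)ᴴ * fromBlocks U 0 0 V = 1 := by
    rw [fromBlocks_conjTranspose, fromBlocks_multiply]
    simp [U, V, ← star_eq_conjTranspose]
  have hWD : (fromBlocks U 0 0 V)ᴴ * fromBlocks A 0 0 D * fromBlocks U 0 0 V =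
      diagonal (RCLike.ofReal ∘ Sum.elim hA.eigenvalues hD.eigenvalues) := by
    rw [conjTranspose_fromBlocks_mul_fromBlocks_mul_fromBlocks,
      hA.conjTranspose_eigenvectorUnitary_mul_mul, hD.conjTranspose_eigenvectorUnitary_mul_mul,
      fromBlocks_diagonal, Sum.comp_elim]
  rw [negInertia_eq_card_of_conj_eq_diagonal (hA.fromBlocks (by simp) hD) hW hWD,
    hA.negInertia_eq, hD.negInertia_eq, Fintype.card_congr Equiv.subtypeSum, Fintype.card_sum]
  rfl

theorem negInertia_fromBlocks₁₁ (hA : A.IsHermitian) (hAu : IsUnit A) (B : Matrix ι κ 𝕜)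
    {D : Matrix κ κ 𝕜} (hD : D.IsHermitian) :
    (fromBlocks A B Bᴴ D).negInertia = A.negInertia + (D - Bᴴ * A⁻¹ * B).negInertia := by
  let := invertibleOfIsUnitDet A ((isUnit_iff_isUnit_det A).mp hAu)
  have hS : (D - Bᴴ * A⁻¹ * B).IsHermitian :=
    hD.sub (isHermitian_conjTranspose_mul_mul B hA.inv)
  have hL : IsUnit (fromBlocks 1 (A⁻¹ * B) 0 1 : Matrix (ι ⊕ κ) (ι ⊕ κ) 𝕜) := by
    simp [isUnit_iff_isUnit_det]
  have hX : fromBlocks A B Bᴴ D = (fromBlocks 1 (A⁻¹ * B) 0 1)ᴴ *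
      fromBlocks A 0 0 (D - Bᴴ * A⁻¹ * B) * fromBlocks 1 (A⁻¹ * B) 0 1 := by
    simpa [fromBlocks_conjTranspose, conjTranspose_mul, hA.inv.eq] using
      fromBlocks_eq_of_invertible₁₁ A B Bᴴ D
  rw [hX, negInertia_conjTranspose_mul_mul (hA.fromBlocks (by simp) hS) hL,
    negInertia_fromBlocks_zero_zero hA hS]

theorem negInertia_fromBlocks₂₂ (hA : A.IsHermitian) (B : Matrix ι κ 𝕜) {D : Matrix κ κ 𝕜}
    (hD : D.IsHermitian) (hDu : IsUnit D) :
    (fromBlocks A B Bᴴ D).negInertia = (A - B * D⁻¹ * Bᴴ).negInertia + D.negInertia := by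
  let := invertibleOfIsUnitDet D ((isUnit_iff_isUnit_det D).mp hDu)
  have hS : (A - B * D⁻¹ * Bᴴ).IsHermitian :=
    hA.sub (isHermitian_mul_mul_conjTranspose B hD.inv)
  have hL : IsUnit (fromBlocks 1 0 (D⁻¹ * Bᴴ) 1 : Matrix (ι ⊕ κ) (ι ⊕ κ) 𝕜) := by
    simp [isUnit_iff_isUnit_det]
  have hX : fromBlocks A B Bᴴ D = (fromBlocks 1 0 (D⁻¹ * Bᴴ) 1)ᴴ *
      fromBlocks (A - B * D⁻¹ * Bᴴ) 0 0 D * fromBlocks 1 0 (D⁻¹ * Bᴴ) 1 := by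
    simpa [fromBlocks_conjTranspose, conjTranspose_mul, hD.inv.eq] using
      fromBlocks_eq_of_invertible₂₂ A B Bᴴ D
  rw [hX, negInertia_conjTranspose_mul_mul (hS.fromBlocks (by simp) hD) hL,
    negInertia_fromBlocks_zero_zero hS hD]

end Blocks

theorem posDef_of_negInertia_neg_eq_card {M : Matrix ι ι 𝕜} (hM : M.IsHermitian)
    (h : (-M).negInertia = Fintype.card ι) : M.PosDef := by
  obtain ⟨F, hF⟩ := exists_negDef_negInertia hM.neg
  simp only [Matrix.mul_neg, Matrix.neg_mul, neg_neg] at hF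
  have hF_inj : Function.Injective F.mulVecLin := by
    rw [← LinearMap.ker_eq_bot, LinearMap.ker_eq_bot']
    intro y hy
    by_contra hne
    have := hF.dotProduct_mulVec_pos hne
    rw [← star_mulVec_dotProduct_mulVec, ← mulVecLin_apply, hy] at this
    simp at this
  have hF_surj : Function.Surjective F.mulVecLin :=
    (LinearMap.injective_iff_surjective_of_finrank_eq_finrank (by simp [h])).mp hF_inj
  refine .of_dotProduct_mulVec_pos hM fun x hx => ?_
  obtain ⟨y, rfl⟩ := hF_surj x
  rw [mulVecLin_apply, star_mulVec_dotProduct_mulVec]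
  exact hF.dotProduct_mulVec_pos fun hy => hx (by simp [hy])

theorem posDef_one_add_mul_inv_mul_conjTranspose_of_negInertia_eq [Fintype κ] [DecidableEq κ]
    (hA : A.IsHermitian) (hAu : IsUnit A) (B : Matrix κ ι 𝕜)
    (h : (A + Bᴴ * B).negInertia = A.negInertia) : (1 + B * A⁻¹ * Bᴴ).PosDef := by
  have h₁₁ := negInertia_fromBlocks₁₁ hA hAu Bᴴ isHermitian_one.neg
  have h₂₂ := negInertia_fromBlocks₂₂ hA Bᴴ isHermitian_one.neg isUnit_one.neg
  have hinv : (-1 : Matrix κ κ 𝕜)⁻¹ = -1 := inv_eq_left_inv (by simp)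
  rw [conjTranspose_conjTranspose, ← neg_add'] at h₁₁
  rw [conjTranspose_conjTranspose, hinv, Matrix.mul_neg, Matrix.mul_one, Matrix.neg_mul,
    sub_neg_eq_add, h, negInertia_neg_one] at h₂₂
  refine posDef_of_negInertia_neg_eq_card ?_ (by omega)
  exact isHermitian_one.add (isHermitian_mul_mul_conjTranspose B hA.inv)

theorem posSemidef_inv_sub_inv_add_conjTranspose_mul_self [Fintype κ] [DecidableEq κ]
    (hA : A.IsHermitian) (hAu : IsUnit A) (B : Matrix κ ι 𝕜) (hM : (1 + B * A⁻¹ * Bᴴ).PosDef) :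
    (A⁻¹ - (A + Bᴴ * B)⁻¹).PosSemidef := by
  have hwood := add_mul_mul_inv_eq_sub A Bᴴ 1 B hAu isUnit_one (by simpa using hM.isUnit)
  rw [Matrix.mul_one, inv_one] at hwood
  rw [hwood, sub_sub_cancel]
  simpa [conjTranspose_mul, hA.inv.eq, Matrix.mul_assoc] using
    hM.inv.posSemidef.conjTranspose_mul_mul_same (B * A⁻¹)

open scoped MatrixOrder in
theorem PosSemidef.exists_eq_conjTranspose_mul_self {M : Matrix ι ι 𝕜} (hM : M.PosSemidef) :
    ∃ B : Matrix ι ι 𝕜, M = Bᴴ * B :=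
  CStarAlgebra.nonneg_iff_eq_star_mul_self.mp hM.nonneg

end Matrix

theorem negCount_eq_negInertia {n : ℕ} (A : Matrix (Fin n) (Fin n) ℂ) :
    negCount A = A.negInertia :=
  rfl

theorem antitonicity_matrices {n : ℕ} (H₁ H₂ : Matrix (Fin n) (Fin n) ℂ)
    (h1 : H₁.IsHermitian) (h2 : H₂.IsHermitian)
    (hu1 : IsUnit H₁) (hu2 : IsUnit H₂)
    (hle : (H₂ - H₁).PosSemidef) :
    (H₁⁻¹ - H₂⁻¹).PosSemidef ↔ negCount H₁ = negCount H₂ := by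
  rw [negCount_eq_negInertia, negCount_eq_negInertia]
  constructor
  · intro hinv
    have h₂₁ := negInertia_le_of_posSemidef_sub h1 h2 hle
    have h₁₂ := negInertia_le_of_posSemidef_sub h2.inv h1.inv hinv
    rw [negInertia_inv h1 hu1, negInertia_inv h2 hu2] at h₁₂
    omega
  · intro hcount
    obtain ⟨B, hB⟩ := hle.exists_eq_conjTranspose_mul_self
    have hH₂ : H₂ = H₁ + Bᴴ * B := by rw [← hB, add_sub_cancel]
    rw [hH₂] at hcount ⊢
    exact posSemidef_inv_sub_inv_add_conjTranspose_mul_self h1 hu1 B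
      (posDef_one_add_mul_inv_mul_conjTranspose_of_negInertia_eq h1 hu1 B hcount.symm)
end

section
/- Let H₁ and H₂ be invertible Hermitian n×n complex matrices with H₁ ≤ H₂. If H₂⁻¹ ≤ H₁⁻¹, then H₁ and H₂ have the same number of negative eigenvalues. -/
open Matrix ComplexOrder

/-!
The number of negative eigenvalues of a Hermitian matrix `A` is the largest dimension of a
subspace on which `x ↦ xᴴ A x` is negative definite. This makes it antitone in the Loewner order,
whence `negCount H₂ ≤ negCount H₁` and `negCount H₁⁻¹ ≤ negCount H₂⁻¹`. It is also unchanged by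
inversion, since `x ↦ A x` carries a subspace on which `A` is negative definite to one on which
`A⁻¹` is: `(A x)ᴴ A⁻¹ (A x) = xᴴ A x`.
-/

lemma finrank_range_extendByZero {R ι κ : Type*} [Semiring R] [StrongRankCondition R]
    [Fintype κ] {s : κ → ι} (hs : Function.Injective s) :
    Module.finrank R (LinearMap.range (Function.ExtendByZero.linearMap R s)) = Fintype.card κ := by
  rw [LinearMap.finrank_range_of_inj (Function.extend_injective hs (0 : ι → R)),
    Module.finrank_fintype_fun_eq_card]

lemma Matrix.finrank_map_mulVecLin {K ι : Type*} [Field K] [Fintype ι] [DecidableEq ι]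
    {Q : Matrix ι ι K} (hQ : IsUnit Q) (W : Submodule K (ι → K)) :
    Module.finrank K (W.map Q.mulVecLin) = Module.finrank K W :=
  (Submodule.equivMapOfInjective _ (mulVec_injective_iff_isUnit.mpr hQ) W).finrank_eq.symm

namespace Matrix

variable {𝕜 ι : Type*} [RCLike 𝕜] [Fintype ι]

def IsNegDefOn (A : Matrix ι ι 𝕜) (W : Submodule 𝕜 (ι → 𝕜)) : Prop :=
  ∀ x ∈ W, x ≠ 0 → star x ⬝ᵥ (A *ᵥ x) < 0

namespace IsNegDefOn

variable {A B : Matrix ι ι 𝕜} {W : Submodule 𝕜 (ι → 𝕜)}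

lemma of_posSemidef_sub (hB : IsNegDefOn B W) (hBA : (B - A).PosSemidef) : IsNegDefOn A W := by
  intro x hx hx0
  have hle := hBA.dotProduct_mulVec_nonneg x
  rw [sub_mulVec, dotProduct_sub, sub_nonneg] at hle
  exact hle.trans_lt (hB x hx hx0)

lemma map {Q : Matrix ι ι 𝕜} (h : IsNegDefOn (Qᴴ * A * Q) W) :
    IsNegDefOn A (W.map Q.mulVecLin) := by
  rintro _ ⟨x, hx, rfl⟩ hx0
  have hx0' : x ≠ 0 := by rintro rfl; simp at hx0
  simpa [← mulVec_mulVec, dotProduct_mulVec, star_mulVec] using h x hx hx0'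

end IsNegDefOn

variable [DecidableEq ι]

lemma dotProduct_diagonal_ofReal_mulVec (d : ι → ℝ) (y : ι → 𝕜) :
    star y ⬝ᵥ (diagonal (RCLike.ofReal ∘ d) *ᵥ y) = ((∑ i, d i * ‖y i‖ ^ 2 : ℝ) : 𝕜) := by
  simp only [dotProduct, mulVec_diagonal, RCLike.ofReal_sum, RCLike.ofReal_mul, RCLike.ofReal_pow]
  refine Finset.sum_congr rfl fun i _ => ?_
  rw [Pi.star_apply, RCLike.star_def, mul_left_comm, RCLike.conj_mul, Function.comp_apply]

lemma finrank_le_card_neg_of_isNegDefOn_diagonal {d : ι → ℝ} {V : Submodule 𝕜 (ι → 𝕜)}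
    (hV : IsNegDefOn (diagonal (RCLike.ofReal ∘ d)) V) :
    Module.finrank 𝕜 V ≤ Fintype.card {i // d i < 0} := by
  let restrict : V →ₗ[𝕜] ({i // d i < 0} → 𝕜) :=
    LinearMap.funLeft 𝕜 𝕜 Subtype.val ∘ₗ V.subtype
  have h_inj : Function.Injective restrict := by
    refine (injective_iff_map_eq_zero restrict).mpr fun y hy => ?_
    by_contra hy0
    have hneg := hV y y.2 (by simpa using hy0)
    have hnonneg : 0 ≤ ∑ i, d i * ‖(y : ι → 𝕜) i‖ ^ 2 := by
      refine Finset.sum_nonneg fun i _ => ?_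
      rcases lt_or_ge (d i) 0 with hi | hi
      · have : (y : ι → 𝕜) i = 0 := congrFun hy ⟨i, hi⟩
        simp [this]
      · positivity
    rw [dotProduct_diagonal_ofReal_mulVec, RCLike.ofReal_lt_zero] at hneg
    exact hneg.not_ge hnonneg
  simpa using LinearMap.finrank_le_finrank_of_injective h_inj

lemma isNegDefOn_diagonal_range_extendByZero (d : ι → ℝ) :
    IsNegDefOn (diagonal (RCLike.ofReal ∘ d))
      (LinearMap.range (Function.ExtendByZero.linearMap 𝕜 (Subtype.val : {i // d i < 0} → ι))) := by
  rintro _ ⟨c, rfl⟩ hx0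
  set x := Function.ExtendByZero.linearMap 𝕜 (Subtype.val : {i // d i < 0} → ι) c
  have h_supp : ∀ i, x i ≠ 0 → d i < 0 := fun i hi => by
    by_contra hdi
    exact hi (Function.extend_apply' _ _ _ fun ⟨j, hj⟩ => hdi (hj ▸ j.2))
  obtain ⟨j, hj⟩ := Function.ne_iff.mp hx0
  rw [dotProduct_diagonal_ofReal_mulVec, RCLike.ofReal_lt_zero]
  refine Finset.sum_neg' (fun i _ => ?_) ⟨j, Finset.mem_univ j, ?_⟩
  · by_cases hi : x i = 0
    · simp [hi]
    · exact mul_nonpos_of_nonpos_of_nonneg (h_supp i hi).le (by positivity)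
  · exact mul_neg_of_neg_of_pos (h_supp j hj) (pow_pos (norm_pos_iff.mpr hj) 2)

namespace IsHermitian

variable {A : Matrix ι ι 𝕜} (hA : A.IsHermitian)
include hA

lemma finrank_le_card_eigenvalues_neg {W : Submodule 𝕜 (ι → 𝕜)} (hW : IsNegDefOn A W) :
    Module.finrank 𝕜 W ≤ Fintype.card {i // hA.eigenvalues i < 0} := by
  set U := hA.eigenvectorUnitary
  have hdiag : IsNegDefOn (diagonal (RCLike.ofReal ∘ hA.eigenvalues))
      (W.map (star (U : Matrix ι ι 𝕜)).mulVecLin) := by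
    refine IsNegDefOn.map ?_
    rwa [← star_eq_conjTranspose, star_star, ← Unitary.conjStarAlgAut_apply (S := 𝕜),
      ← hA.spectral_theorem]
  rw [← finrank_map_mulVecLin (Unitary.isUnit_coe (U := star U)) W]
  exact finrank_le_card_neg_of_isNegDefOn_diagonal hdiag

lemma exists_isNegDefOn_finrank_eq :
    ∃ W : Submodule 𝕜 (ι → 𝕜), IsNegDefOn A W ∧
      Module.finrank 𝕜 W = Fintype.card {i // hA.eigenvalues i < 0} := by
  set U := hA.eigenvectorUnitary
  set V := LinearMap.range
    (Function.ExtendByZero.linearMap 𝕜 (Subtype.val : {i // hA.eigenvalues i < 0} → ι))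
  have hconj : (U : Matrix ι ι 𝕜)ᴴ * A * (U : Matrix ι ι 𝕜) =
      diagonal (RCLike.ofReal ∘ hA.eigenvalues) := by
    simpa [star_eq_conjTranspose] using hA.conjStarAlgAut_star_eigenvectorUnitary
  refine ⟨V.map (U : Matrix ι ι 𝕜).mulVecLin, IsNegDefOn.map ?_, ?_⟩
  · rw [hconj]
    exact isNegDefOn_diagonal_range_extendByZero _
  · rw [finrank_map_mulVecLin Unitary.isUnit_coe, finrank_range_extendByZero Subtype.val_injective]

end IsHermitian

end Matrix

lemma negCount_eq_card {n : ℕ} {A : Matrix (Fin n) (Fin n) ℂ} (hA : A.IsHermitian) :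
    negCount A = Fintype.card {i // hA.eigenvalues i < 0} :=
  dif_pos hA

lemma negCount_le_of_posSemidef_sub {n : ℕ} {A B : Matrix (Fin n) (Fin n) ℂ}
    (hA : A.IsHermitian) (hB : B.IsHermitian) (h : (B - A).PosSemidef) :
    negCount B ≤ negCount A := by
  obtain ⟨W, hW, hdim⟩ := hB.exists_isNegDefOn_finrank_eq
  rw [negCount_eq_card hA, negCount_eq_card hB, ← hdim]
  exact hA.finrank_le_card_eigenvalues_neg (hW.of_posSemidef_sub h)

lemma negCount_le_negCount_inv {n : ℕ} {A : Matrix (Fin n) (Fin n) ℂ}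
    (hA : A.IsHermitian) (hu : IsUnit A) : negCount A ≤ negCount A⁻¹ := by
  obtain ⟨W, hW, hdim⟩ := hA.exists_isNegDefOn_finrank_eq
  have hW_inv : IsNegDefOn A⁻¹ (W.map A.mulVecLin) := by
    refine IsNegDefOn.map ?_
    rwa [hA.eq, mul_nonsing_inv A ((isUnit_iff_isUnit_det A).mp hu), one_mul]
  rw [negCount_eq_card hA, negCount_eq_card hA.inv, ← hdim, ← finrank_map_mulVecLin hu W]
  exact hA.inv.finrank_le_card_eigenvalues_neg hW_inv

theorem same_negCount_of_antitone {n : ℕ} (H₁ H₂ : Matrix (Fin n) (Fin n) ℂ)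
    (h1 : H₁.IsHermitian) (h2 : H₂.IsHermitian)
    (hu1 : IsUnit H₁) (hu2 : IsUnit H₂)
    (hle : (H₂ - H₁).PosSemidef)
    (hinv : (H₁⁻¹ - H₂⁻¹).PosSemidef) :
    negCount H₁ = negCount H₂ := by
  refine le_antisymm ?_ (negCount_le_of_posSemidef_sub h1 h2 hle)
  calc negCount H₁ ≤ negCount H₁⁻¹ := negCount_le_negCount_inv h1 hu1
    _ ≤ negCount H₂⁻¹ := negCount_le_of_posSemidef_sub h2.inv h1.inv hinv
    _ ≤ negCount H₂⁻¹⁻¹ := negCount_le_negCount_inv h2.inv (isUnit_nonsing_inv_iff.mpr hu2)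
    _ = negCount H₂ := by rw [nonsing_inv_nonsing_inv _ ((isUnit_iff_isUnit_det _).mp hu2)]
end

section
/- Let J be a Hermitian involution (J = J* and J² = I) on ℂⁿ and let U be an n×n complex matrix. Then the number of negative eigenvalues of J - U J U* equals the number of negative eigenvalues of J - U* J U. -/
open Matrix ComplexOrder

/-!
View `x ↦ Re (x* A x)` as a real quadratic form on `ℂⁿ`. By Sylvester's law of inertia (Mathlib's
`sigNeg`) its negative index is invariant under congruence `A ↦ M A M*`, and for Hermitian `A` a
unitary diagonalization turns it into `∑ λᵢ ((Re xᵢ)² + (Im xᵢ)²)`, so the index is twice the number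
of negative eigenvalues; in particular it is additive on block diagonal matrices. Since `J² = 1`,
block elimination makes `[[J, U], [U*, J]]` congruent both to `diag (J - U J U*, J)` and to
`diag (J, J - U* J U)`, and comparing indices gives the claim.
-/

namespace Matrix

variable {m k : Type*} [Fintype m] [Fintype k]

noncomputable def hermitianForm (A : Matrix m m ℂ) : QuadraticForm ℝ (m → ℂ) :=
  LinearMap.BilinMap.toQuadraticMap <| LinearMap.mk₂ ℝ (fun x y => (star x ⬝ᵥ A *ᵥ y).re)
    (fun _ _ _ => by simp [add_dotProduct])
    (fun _ _ _ => by simp [star_smul, smul_dotProduct])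
    (fun _ _ _ => by simp [mulVec_add, dotProduct_add])
    (fun _ _ _ => by simp [mulVec_smul, dotProduct_smul])

theorem hermitianForm_apply (A : Matrix m m ℂ) (x : m → ℂ) :
    hermitianForm A x = (star x ⬝ᵥ A *ᵥ x).re := rfl

theorem hermitianForm_mul_mul_conjTranspose (A M : Matrix m m ℂ) (x : m → ℂ) :
    hermitianForm (M * A * Mᴴ) x = hermitianForm A (Mᴴ *ᵥ x) := by
  rw [hermitianForm_apply, hermitianForm_apply, star_mulVec, conjTranspose_conjTranspose,
    ← mulVec_mulVec, ← mulVec_mulVec, dotProduct_mulVec]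

variable [DecidableEq m] [DecidableEq k]

theorem equivalent_hermitianForm_mul_mul_conjTranspose (A : Matrix m m ℂ) {M : Matrix m m ℂ}
    (hM : IsUnit M) : (hermitianForm (M * A * Mᴴ)).Equivalent (hermitianForm A) :=
  ⟨⟨(toLinearEquiv' Mᴴ hM.star.invertible).restrictScalars ℝ, fun x =>
    (hermitianForm_mul_mul_conjTranspose A M x).symm⟩⟩

theorem sigNeg_hermitianForm_mul_mul_conjTranspose (A : Matrix m m ℂ) {M : Matrix m m ℂ}
    (hM : IsUnit M) : sigNeg (hermitianForm (M * A * Mᴴ)) = sigNeg (hermitianForm A) :=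
  (equivalent_hermitianForm_mul_mul_conjTranspose A hM).sigNeg_eq

theorem equivalent_hermitianForm_diagonal (w : m → ℝ) :
    (hermitianForm (diagonal (Complex.ofReal ∘ w))).Equivalent
      (QuadraticMap.weightedSumSquares ℝ fun p : (_ : m) × Fin 2 => w p.1) :=
  ⟨⟨(Pi.basis fun _ => Complex.basisOneI).equivFun, fun x => by
    simp [hermitianForm_apply, dotProduct, mulVec_diagonal, QuadraticMap.weightedSumSquares_apply,
      Fintype.sum_sigma, Fin.sum_univ_two, mul_add, mul_left_comm]⟩⟩

theorem sigNeg_hermitianForm_diagonal (w : m → ℝ) :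
    sigNeg (hermitianForm (diagonal (Complex.ofReal ∘ w))) = 2 * Fintype.card {i // w i < 0} := by
  rw [QuadraticForm.sigNeg_of_equiv_weightedSumSquares (equivalent_hermitianForm_diagonal w),
    Set.ncard_eq_toFinset_card', Fintype.card_subtype, Set.toFinset_ofPred, Finset.card_filter,
    Finset.card_filter, Fintype.sum_sigma, Finset.mul_sum]
  simp [apply_ite Finset.card]

theorem IsHermitian.sigNeg_hermitianForm {A : Matrix m m ℂ} (hA : A.IsHermitian) :
    sigNeg (hermitianForm A) = 2 * Fintype.card {i // hA.eigenvalues i < 0} := by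
  conv_lhs => rw [hA.spectral_theorem, Unitary.conjStarAlgAut_apply, star_eq_conjTranspose,
    sigNeg_hermitianForm_mul_mul_conjTranspose _ Unitary.isUnit_coe]
  exact sigNeg_hermitianForm_diagonal _

theorem sigNeg_hermitianForm_fromBlocks {A : Matrix m m ℂ} {B : Matrix k k ℂ}
    (hA : A.IsHermitian) (hB : B.IsHermitian) :
    sigNeg (hermitianForm (fromBlocks A 0 0 B)) =
      sigNeg (hermitianForm A) + sigNeg (hermitianForm B) := by
  set V : Matrix (m ⊕ k) (m ⊕ k) ℂ :=
    fromBlocks (hA.eigenvectorUnitary : Matrix m m ℂ) 0 0 hB.eigenvectorUnitary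
  have hV : IsUnit V := by
    rw [isUnit_iff_isUnit_det, det_fromBlocks_zero₂₁]
    exact ((isUnit_iff_isUnit_det _).1 Unitary.isUnit_coe).mul
      ((isUnit_iff_isUnit_det _).1 Unitary.isUnit_coe)
  have hdiag : fromBlocks A 0 0 B =
      V * diagonal (Complex.ofReal ∘ Sum.elim hA.eigenvalues hB.eigenvalues) * Vᴴ := by
    conv_lhs => rw [hA.spectral_theorem, hB.spectral_theorem]
    rw [Sum.comp_elim, ← fromBlocks_diagonal, fromBlocks_conjTranspose, fromBlocks_multiply,
      fromBlocks_multiply]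
    simp [star_eq_conjTranspose]
  rw [hdiag, sigNeg_hermitianForm_mul_mul_conjTranspose _ hV, sigNeg_hermitianForm_diagonal,
    hA.sigNeg_hermitianForm, hB.sigNeg_hermitianForm, Fintype.card_congr Equiv.subtypeSum,
    Fintype.card_sum, mul_add]
  rfl

section Schur

variable {J : Matrix m m ℂ}

theorem sigNeg_hermitianForm_fromBlocks_schur₁₁ (hJ : J.IsHermitian) (hJ2 : J * J = 1)
    (U : Matrix m m ℂ) :
    sigNeg (hermitianForm (fromBlocks (J - U * J * Uᴴ) 0 0 J)) =
      sigNeg (hermitianForm (fromBlocks J U Uᴴ J)) := by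
  have hN : IsUnit (fromBlocks 1 (-(U * J)) 0 1 : Matrix (m ⊕ m) (m ⊕ m) ℂ) := by
    simp [isUnit_iff_isUnit_det]
  rw [← sigNeg_hermitianForm_mul_mul_conjTranspose (fromBlocks J U Uᴴ J) hN]
  congr 2
  rw [fromBlocks_conjTranspose, fromBlocks_multiply, fromBlocks_multiply]
  have hJJ (X : Matrix m m ℂ) : X * J * J = X := by rw [mul_assoc, hJ2, mul_one]
  simp [hJ.eq, ← mul_assoc, hJJ, hJ2, sub_eq_add_neg, add_comm]

theorem sigNeg_hermitianForm_fromBlocks_schur₂₂ (hJ : J.IsHermitian) (hJ2 : J * J = 1)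
    (U : Matrix m m ℂ) :
    sigNeg (hermitianForm (fromBlocks J 0 0 (J - Uᴴ * J * U))) =
      sigNeg (hermitianForm (fromBlocks J U Uᴴ J)) := by
  have hN : IsUnit (fromBlocks 1 0 (-(Uᴴ * J)) 1 : Matrix (m ⊕ m) (m ⊕ m) ℂ) := by
    simp [isUnit_iff_isUnit_det]
  rw [← sigNeg_hermitianForm_mul_mul_conjTranspose (fromBlocks J U Uᴴ J) hN]
  congr 2
  rw [fromBlocks_conjTranspose, fromBlocks_multiply, fromBlocks_multiply]
  have hJJ (X : Matrix m m ℂ) : X * J * J = X := by rw [mul_assoc, hJ2, mul_one]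
  simp [hJ.eq, ← mul_assoc, hJJ, hJ2, sub_eq_add_neg, add_comm]

end Schur

end Matrix

theorem two_mul_negCount {n : ℕ} {A : Matrix (Fin n) (Fin n) ℂ} (hA : A.IsHermitian) :
    2 * negCount A = sigNeg (hermitianForm A) := by
  rw [negCount, dif_pos hA, hA.sigNeg_hermitianForm]

theorem negCount_congruence_trick {n : ℕ} (J U : Matrix (Fin n) (Fin n) ℂ)
    (hJ : J.IsHermitian) (hJ2 : J * J = 1) :
    negCount (J - U * J * Uᴴ) = negCount (J - Uᴴ * J * U) := by
  have hA₁ : (J - U * J * Uᴴ).IsHermitian := hJ.sub (isHermitian_mul_mul_conjTranspose U hJ)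
  have hA₂ : (J - Uᴴ * J * U).IsHermitian := hJ.sub (isHermitian_conjTranspose_mul_mul U hJ)
  have key := (sigNeg_hermitianForm_fromBlocks_schur₁₁ hJ hJ2 U).trans
    (sigNeg_hermitianForm_fromBlocks_schur₂₂ hJ hJ2 U).symm
  rw [sigNeg_hermitianForm_fromBlocks hA₁ hJ, sigNeg_hermitianForm_fromBlocks hJ hA₂,
    ← two_mul_negCount hA₁, ← two_mul_negCount hA₂, ← two_mul_negCount hJ] at key
  omega
end

section
/- Let H₁ and H₂ be Hermitian n×n complex matrices with H₁ ≤ H₂. If v is a vector lying both in the span of the eigenvectors of H₂ with nonpositive eigenvalues and in the span of the eigenvectors of H₁ with nonnegative eigenvalues, then H₁ v = 0 and H₂ v = 0. -/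
/-!
In an orthonormal eigenbasis of a Hermitian `H`, with coordinates `cᵢ` of `v`, one has
`re ⟪v, H v⟫ = ∑ λᵢ |cᵢ|²` and `H v` has coordinates `λᵢ cᵢ`. Membership of `v` in the
nonnegative (resp. nonpositive) eigenspan makes every term of this sum `≥ 0` for `H₁`
(resp. `≤ 0` for `H₂`), while `H₁ ≤ H₂` bounds the first sum by the second. Hence both sums
vanish termwise, i.e. `λᵢ cᵢ = 0` for all `i`, for `H₁` as well as for `H₂`.
-/

open Matrix ComplexOrder

/-- The span of the eigenvectors of a Hermitian matrix whose eigenvalue satisfies `P`. -/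
noncomputable def eigSpan {n : ℕ} {A : Matrix (Fin n) (Fin n) ℂ} (hA : A.IsHermitian)
    (P : ℝ → Prop) : Submodule ℂ (EuclideanSpace ℂ (Fin n)) :=
  Submodule.span ℂ {w | ∃ i, P (hA.eigenvalues i) ∧ w = hA.eigenvectorBasis i}


namespace Matrix.IsHermitian

variable {n : ℕ} {A : Matrix (Fin n) (Fin n) ℂ} (hA : A.IsHermitian)

lemma repr_eigenvectorBasis_eq_zero_of_mem_eigSpan {P : ℝ → Prop}
    {v : EuclideanSpace ℂ (Fin n)} (hv : v ∈ eigSpan hA P) {j : Fin n}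
    (hj : ¬ P (hA.eigenvalues j)) :
    hA.eigenvectorBasis.repr v j = 0 := by
  rw [OrthonormalBasis.repr_apply_apply]
  induction hv using Submodule.span_induction with
  | mem x hx =>
    obtain ⟨i, hPi, rfl⟩ := hx
    exact hA.eigenvectorBasis.orthonormal.2 fun h ↦ hj (h ▸ hPi)
  | zero => exact inner_zero_right _
  | add x y _ _ hx hy => rw [inner_add_right, hx, hy, add_zero]
  | smul c x _ hx => rw [inner_smul_right, hx, mul_zero]

lemma toEuclideanLin_eigenvectorBasis (i : Fin n) :
    toEuclideanLin A (hA.eigenvectorBasis i) =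
      (hA.eigenvalues i : ℂ) • hA.eigenvectorBasis i := by
  ext j
  simpa [toLpLin_apply, Complex.real_smul] using
    congrFun (hA.mulVec_eigenvectorBasis i) j

lemma repr_toEuclideanLin (v : EuclideanSpace ℂ (Fin n)) (i : Fin n) :
    hA.eigenvectorBasis.repr (toEuclideanLin A v) i =
      hA.eigenvalues i * hA.eigenvectorBasis.repr v i := by
  rw [OrthonormalBasis.repr_apply_apply, OrthonormalBasis.repr_apply_apply,
    ← isSymmetric_toEuclideanLin_iff.2 hA, toEuclideanLin_eigenvectorBasis, inner_smul_left,
    Complex.conj_ofReal]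

lemma re_inner_toEuclideanLin (v : EuclideanSpace ℂ (Fin n)) :
    (inner ℂ v (toEuclideanLin A v)).re =
      ∑ i, hA.eigenvalues i * ‖hA.eigenvectorBasis.repr v i‖ ^ 2 := by
  rw [← hA.eigenvectorBasis.repr.inner_map_map, PiLp.inner_apply, Complex.re_sum]
  refine Finset.sum_congr rfl fun i _ ↦ ?_
  rw [repr_toEuclideanLin, RCLike.inner_apply, mul_assoc, Complex.mul_conj']
  norm_cast

lemma toEuclideanLin_eq_zero_iff (v : EuclideanSpace ℂ (Fin n)) :
    toEuclideanLin A v = 0 ↔ ∀ i, hA.eigenvalues i * ‖hA.eigenvectorBasis.repr v i‖ ^ 2 = 0 := by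
  rw [← hA.eigenvectorBasis.repr.map_eq_zero_iff, PiLp.ext_iff]
  simp [repr_toEuclideanLin]

lemma eigenvalue_mul_norm_repr_sq_nonneg_of_mem_eigSpan {v : EuclideanSpace ℂ (Fin n)}
    (hv : v ∈ eigSpan hA (fun t => 0 ≤ t)) (i : Fin n) :
    0 ≤ hA.eigenvalues i * ‖hA.eigenvectorBasis.repr v i‖ ^ 2 := by
  by_cases hi : 0 ≤ hA.eigenvalues i
  · positivity
  · simp [hA.repr_eigenvectorBasis_eq_zero_of_mem_eigSpan hv hi]

lemma eigenvalue_mul_norm_repr_sq_nonpos_of_mem_eigSpan {v : EuclideanSpace ℂ (Fin n)}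
    (hv : v ∈ eigSpan hA (fun t => t ≤ 0)) (i : Fin n) :
    hA.eigenvalues i * ‖hA.eigenvectorBasis.repr v i‖ ^ 2 ≤ 0 := by
  by_cases hi : hA.eigenvalues i ≤ 0
  · exact mul_nonpos_of_nonpos_of_nonneg hi (by positivity)
  · simp [hA.repr_eigenvectorBasis_eq_zero_of_mem_eigSpan hv hi]

end Matrix.IsHermitian

lemma Matrix.re_inner_toEuclideanLin_le_of_posSemidef {ι 𝕜 : Type*} [Fintype ι] [DecidableEq ι]
    [RCLike 𝕜] {A B : Matrix ι ι 𝕜} (hAB : (B - A).PosSemidef) (v : EuclideanSpace 𝕜 ι) :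
    RCLike.re (inner 𝕜 v (toEuclideanLin A v)) ≤ RCLike.re (inner 𝕜 v (toEuclideanLin B v)) := by
  have := (isPositive_toEuclideanLin_iff.2 hAB).re_inner_nonneg_right v
  rw [map_sub, LinearMap.sub_apply, inner_sub_right, map_sub] at this
  exact sub_nonneg.1 this

open Finset in
theorem kernel_of_double_membership {n : ℕ} (H₁ H₂ : Matrix (Fin n) (Fin n) ℂ)
    (h1 : H₁.IsHermitian) (h2 : H₂.IsHermitian)
    (hle : (H₂ - H₁).PosSemidef)
    (v : EuclideanSpace ℂ (Fin n))
    (hv2 : v ∈ eigSpan h2 (fun t => t ≤ 0))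
    (hv1 : v ∈ eigSpan h1 (fun t => 0 ≤ t)) :
    Matrix.toEuclideanLin H₁ v = 0 ∧ Matrix.toEuclideanLin H₂ v = 0 := by
  have hterms₁ : ∀ i ∈ univ, 0 ≤ h1.eigenvalues i * ‖h1.eigenvectorBasis.repr v i‖ ^ 2 :=
    fun i _ ↦ h1.eigenvalue_mul_norm_repr_sq_nonneg_of_mem_eigSpan hv1 i
  have hterms₂ : ∀ i ∈ univ, h2.eigenvalues i * ‖h2.eigenvectorBasis.repr v i‖ ^ 2 ≤ 0 :=
    fun i _ ↦ h2.eigenvalue_mul_norm_repr_sq_nonpos_of_mem_eigSpan hv2 i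
  have hquad := re_inner_toEuclideanLin_le_of_posSemidef hle v
  rw [RCLike.re_to_complex, RCLike.re_to_complex, h1.re_inner_toEuclideanLin,
    h2.re_inner_toEuclideanLin] at hquad
  have hsum₁ := le_antisymm (hquad.trans (sum_nonpos hterms₂)) (sum_nonneg hterms₁)
  have hsum₂ := le_antisymm (sum_nonpos hterms₂) ((sum_nonneg hterms₁).trans hquad)
  exact ⟨(h1.toEuclideanLin_eq_zero_iff v).2 fun i ↦
      (sum_eq_zero_iff_of_nonneg hterms₁).1 hsum₁ i (mem_univ i),
    (h2.toEuclideanLin_eq_zero_iff v).2 fun i ↦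
      (sum_eq_zero_iff_of_nonpos hterms₂).1 hsum₂ i (mem_univ i)⟩
end

section
/- Let H₁ and H₂ be Hermitian n×n complex matrices with H₁ ≤ H₂. If the numbers of nonpositive eigenvalues of H₁ and H₂ coincide, then ker H₁ ⊆ ker H₂. -/
/-!
Let `W` be the span of the eigenvectors of `H₂` with nonpositive eigenvalues, and `v ∈ ker H₁`.
On `W + ℂ v` the form of `H₁` is nonpositive, since `x ↦ x⋆ H₁ x` is invariant under translation
by `ker H₁` and `H₁ ≤ H₂ ≤ 0` on `W`. A subspace on which `H₁` is nonpositive meets the span of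
its positive eigenvectors trivially, so its dimension is at most `nonposCount H₁ = dim W`; hence
`v ∈ W`. Then `0 = v⋆ H₁ v ≤ v⋆ H₂ v ≤ 0`, so `v⋆ (H₂ - H₁) v = 0`, and positive semidefiniteness
of `H₂ - H₁` gives `H₂ v = H₁ v = 0`.
-/

open Matrix ComplexOrder

lemma Matrix.star_dotProduct_diagonal_ofReal_mulVec {𝕜 n : Type*} [RCLike 𝕜] [Fintype n]
    [DecidableEq n] (d : n → ℝ) (y : n → 𝕜) :
    star y ⬝ᵥ (diagonal (RCLike.ofReal ∘ d) *ᵥ y) = ((∑ i, d i * ‖y i‖ ^ 2 : ℝ) : 𝕜) := by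
  push_cast
  refine Finset.sum_congr rfl fun i _ => ?_
  rw [mulVec_diagonal, ← RCLike.conj_mul, Function.comp_apply, Pi.star_apply, RCLike.star_def]
  ring

namespace Matrix.IsHermitian

variable {𝕜 n : Type*} [RCLike 𝕜] [Fintype n] {A : Matrix n n 𝕜}

lemma dotProduct_mulVec_add_of_mulVec_eq_zero (hA : A.IsHermitian) {v : n → 𝕜}
    (hv : A *ᵥ v = 0) (x : n → 𝕜) :
    star (x + v) ⬝ᵥ (A *ᵥ (x + v)) = star x ⬝ᵥ (A *ᵥ x) := by
  rw [mulVec_add, hv, add_zero, star_add, add_dotProduct, dotProduct_mulVec (star v),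
    ← hA, ← star_mulVec, hv, star_zero, zero_dotProduct, add_zero]

variable [DecidableEq n] (hA : A.IsHermitian)

lemma dotProduct_mulVec_eq_sum (x : n → 𝕜) :
    star x ⬝ᵥ (A *ᵥ x) = ((∑ i, hA.eigenvalues i *
      ‖(star (hA.eigenvectorUnitary : Matrix n n 𝕜) *ᵥ x) i‖ ^ 2 : ℝ) : 𝕜) := by
  conv_lhs => rw [hA.spectral_theorem, Unitary.conjStarAlgAut_apply, ← mulVec_mulVec,
    ← mulVec_mulVec, dotProduct_mulVec]
  have : star x ᵥ* (hA.eigenvectorUnitary : Matrix n n 𝕜) =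
      star (star (hA.eigenvectorUnitary : Matrix n n 𝕜) *ᵥ x) := by
    rw [star_mulVec, ← star_eq_conjTranspose, star_star]
  rw [this, star_dotProduct_diagonal_ofReal_mulVec]

/-- The span of the eigenvectors `hA.eigenvectorBasis i` with `i ∈ s`. -/
noncomputable def eigenSpan (s : Set n) : Submodule 𝕜 (n → 𝕜) :=
  (Pi.spanSubset 𝕜 s).map (UnitaryGroup.toLinearEquiv hA.eigenvectorUnitary).toLinearMap

lemma mem_eigenSpan_iff {s : Set n} {x : n → 𝕜} :
    x ∈ hA.eigenSpan s ↔
      ∀ i ∉ s, (star (hA.eigenvectorUnitary : Matrix n n 𝕜) *ᵥ x) i = 0 := by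
  rw [eigenSpan, Submodule.mem_map_equiv, Pi.mem_spanSubset_iff]
  rfl

lemma finrank_eigenSpan (s : Set n) : Module.finrank 𝕜 (hA.eigenSpan s) = s.ncard := by
  rw [eigenSpan, LinearEquiv.finrank_map_eq, Pi.dim_spanSubset]

lemma dotProduct_mulVec_nonpos_of_mem_eigenSpan {x : n → 𝕜}
    (hx : x ∈ hA.eigenSpan {i | hA.eigenvalues i ≤ 0}) : star x ⬝ᵥ (A *ᵥ x) ≤ 0 := by
  rw [hA.dotProduct_mulVec_eq_sum, RCLike.ofReal_nonpos]
  refine Finset.sum_nonpos fun i _ => ?_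
  by_cases hi : hA.eigenvalues i ≤ 0
  · exact mul_nonpos_of_nonpos_of_nonneg hi (by positivity)
  · simp [(hA.mem_eigenSpan_iff).mp hx i hi]

lemma dotProduct_mulVec_pos_of_mem_eigenSpan {x : n → 𝕜}
    (hx : x ∈ hA.eigenSpan {i | 0 < hA.eigenvalues i}) (hx0 : x ≠ 0) :
    0 < star x ⬝ᵥ (A *ᵥ x) := by
  set y := star (hA.eigenvectorUnitary : Matrix n n 𝕜) *ᵥ x
  have hy : y ≠ 0 := fun hy => hx0 <| by
    simpa [y, mulVec_mulVec] using congrArg ((hA.eigenvectorUnitary : Matrix n n 𝕜) *ᵥ ·) hy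
  obtain ⟨j, hj⟩ := Function.ne_iff.mp hy
  have hjpos : 0 < hA.eigenvalues j := by
    by_contra hj'
    exact hj ((hA.mem_eigenSpan_iff).mp hx j hj')
  rw [hA.dotProduct_mulVec_eq_sum, RCLike.ofReal_pos]
  refine Finset.sum_pos' (fun i _ => ?_) ⟨j, Finset.mem_univ j, by positivity⟩
  by_cases hi : 0 < hA.eigenvalues i
  · positivity
  · simp [(hA.mem_eigenSpan_iff).mp hx i hi]

lemma finrank_le_ncard_of_dotProduct_mulVec_nonpos {V : Submodule 𝕜 (n → 𝕜)}
    (hV : ∀ x ∈ V, star x ⬝ᵥ (A *ᵥ x) ≤ 0) :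
    Module.finrank 𝕜 V ≤ {i | hA.eigenvalues i ≤ 0}.ncard := by
  have hdisj : Disjoint V (hA.eigenSpan {i | 0 < hA.eigenvalues i}) := by
    rw [Submodule.disjoint_def]
    intro x hxV hxP
    by_contra hx0
    exact (hV x hxV).not_gt (hA.dotProduct_mulVec_pos_of_mem_eigenSpan hxP hx0)
  have hcompl : {i | 0 < hA.eigenvalues i}.ncard + {i | hA.eigenvalues i ≤ 0}.ncard =
      Fintype.card n := by
    rw [← Nat.card_eq_fintype_card, ← Set.ncard_add_ncard_compl {i | 0 < hA.eigenvalues i},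
      Set.compl_ofPred]
    simp_rw [not_lt]
  have := Submodule.finrank_add_finrank_le_of_disjoint hdisj
  rw [finrank_eigenSpan, Module.finrank_fintype_fun_eq_card] at this
  omega

end Matrix.IsHermitian

lemma nonposCount_eq_ncard {n : ℕ} {A : Matrix (Fin n) (Fin n) ℂ} (hA : A.IsHermitian) :
    nonposCount A = {i | hA.eigenvalues i ≤ 0}.ncard := by
  rw [nonposCount, dif_pos hA, ← Nat.card_eq_fintype_card, Set.ncard_def]
  rfl

theorem ker_subset_of_nonposCount_eq {n : ℕ} (H₁ H₂ : Matrix (Fin n) (Fin n) ℂ)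
    (h1 : H₁.IsHermitian) (h2 : H₂.IsHermitian)
    (hle : (H₂ - H₁).PosSemidef)
    (hcount : nonposCount H₁ = nonposCount H₂) :
    ∀ v : Fin n → ℂ, H₁ *ᵥ v = 0 → H₂ *ᵥ v = 0 := by
  intro v hv
  have hmono : ∀ x, star x ⬝ᵥ (H₁ *ᵥ x) ≤ star x ⬝ᵥ (H₂ *ᵥ x) := fun x => by
    simpa [sub_mulVec, dotProduct_sub] using hle.dotProduct_mulVec_nonneg x
  set W := h2.eigenSpan {i | h2.eigenvalues i ≤ 0}
  have hnonpos : ∀ x ∈ W ⊔ ℂ ∙ v, star x ⬝ᵥ (H₁ *ᵥ x) ≤ 0 := by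
    intro x hx
    obtain ⟨w, hw, _, hcv, rfl⟩ := Submodule.mem_sup.mp hx
    obtain ⟨c, rfl⟩ := Submodule.mem_span_singleton.mp hcv
    rw [h1.dotProduct_mulVec_add_of_mulVec_eq_zero (by rw [mulVec_smul, hv, smul_zero])]
    exact (hmono w).trans (h2.dotProduct_mulVec_nonpos_of_mem_eigenSpan hw)
  have hvW : v ∈ W := by
    have hdim := h1.finrank_le_ncard_of_dotProduct_mulVec_nonpos hnonpos
    rw [← nonposCount_eq_ncard h1, hcount, nonposCount_eq_ncard h2,
      ← h2.finrank_eigenSpan] at hdim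
    rw [Submodule.eq_of_le_of_finrank_le (le_sup_left : W ≤ W ⊔ ℂ ∙ v) hdim]
    exact Submodule.mem_sup_right (Submodule.mem_span_singleton_self v)
  have hzero : star v ⬝ᵥ ((H₂ - H₁) *ᵥ v) = 0 := by
    refine le_antisymm ?_ (hle.dotProduct_mulVec_nonneg v)
    rw [sub_mulVec, hv, sub_zero]
    exact h2.dotProduct_mulVec_nonpos_of_mem_eigenSpan hvW
  simpa [sub_mulVec, hv] using (hle.dotProduct_mulVec_zero_iff v).mp hzero
end

section
/- Let H₁ and H₂ be Hermitian n×n complex matrices with H₁ ≤ H₂. If the numbers of negative eigenvalues of H₁ and H₂ coincide, then ker H₂ ⊆ ker H₁. -/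
open Matrix ComplexOrder

/-! If `H₂ v = 0` but `H₁ v ≠ 0`, then `H₁` is negative definite on the span `W` of `v` and the
eigenvectors of `H₂` with negative eigenvalues: writing `x = u + t v` with `u` in that span,
`⟪H₁ x, x⟫ = ⟪H₂ u, u⟫ - ⟪(H₂ - H₁) x, x⟫`, and the last term is strictly positive when `u = 0`
because `(H₂ - H₁) v = -H₁ v ≠ 0`. A subspace on which `H₁` is negative definite meets the span of
the eigenvectors of `H₁` with nonnegative eigenvalues trivially, so `H₁` has at least
`dim W = negCount H₂ + 1` negative eigenvalues. -/

open RCLike Module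
open scoped InnerProductSpace

namespace OrthonormalBasis

variable {𝕜 E ι : Type*} [RCLike 𝕜] [NormedAddCommGroup E] [InnerProductSpace 𝕜 E] [Fintype ι]

def spanSubfamily (b : OrthonormalBasis ι 𝕜 E) (p : ι → Prop) : Submodule 𝕜 E :=
  Submodule.span 𝕜 (Set.range fun i : {i // p i} => b i)

theorem finrank_spanSubfamily (b : OrthonormalBasis ι 𝕜 E) (p : ι → Prop) [DecidablePred p] :
    finrank 𝕜 (b.spanSubfamily p) = Fintype.card {i // p i} :=
  finrank_span_eq_card (b.orthonormal.linearIndependent.comp _ Subtype.val_injective)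

theorem inner_eq_zero_of_mem_spanSubfamily {b : OrthonormalBasis ι 𝕜 E} {p : ι → Prop} {x : E}
    (hx : x ∈ b.spanSubfamily p) {i : ι} (hi : ¬ p i) : ⟪b i, x⟫_𝕜 = 0 := by
  have : b.spanSubfamily p ≤ LinearMap.ker (innerₛₗ 𝕜 (b i)) := by
    refine Submodule.span_le.mpr ?_
    rintro _ ⟨j, rfl⟩
    exact b.orthonormal.inner_eq_zero fun h => hi (h ▸ j.2)
  exact this hx

theorem exists_inner_ne_zero (b : OrthonormalBasis ι 𝕜 E) {x : E} (hx : x ≠ 0) :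
    ∃ i, ⟪b i, x⟫_𝕜 ≠ 0 := by
  by_contra! h
  exact hx (by simpa [h] using (b.sum_repr' x).symm)

variable {T : E →ₗ[𝕜] E} {b : OrthonormalBasis ι 𝕜 E} {μ : ι → ℝ}

theorem inner_apply_of_apply_eq_smul (hT : ∀ i, T (b i) = (μ i : 𝕜) • b i) (i : ι) (x : E) :
    ⟪b i, T x⟫_𝕜 = μ i * ⟪b i, x⟫_𝕜 := by
  classical
  conv_lhs => rw [← b.sum_repr' x]
  simp_rw [map_sum, map_smul, hT, inner_sum, inner_smul_right, b.inner_eq_ite]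
  simp [mul_comm]

theorem isSymmetric_of_apply_eq_smul (hT : ∀ i, T (b i) = (μ i : 𝕜) • b i) : T.IsSymmetric := by
  intro x y
  rw [← b.sum_inner_mul_inner, ← b.sum_inner_mul_inner x]
  refine Finset.sum_congr rfl fun i _ => ?_
  rw [← inner_conj_symm, inner_apply_of_apply_eq_smul hT, inner_apply_of_apply_eq_smul hT]
  simp only [map_mul, conj_ofReal, inner_conj_symm]
  ring

theorem re_inner_apply_self_eq_sum (hT : ∀ i, T (b i) = (μ i : 𝕜) • b i) (x : E) :
    re ⟪T x, x⟫_𝕜 = ∑ i, μ i * ‖⟪b i, x⟫_𝕜‖ ^ 2 := by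
  rw [← b.sum_inner_mul_inner, map_sum]
  refine Finset.sum_congr rfl fun i _ => ?_
  rw [← inner_conj_symm, inner_apply_of_apply_eq_smul hT, map_mul (starRingEnd 𝕜), conj_ofReal,
    mul_assoc, RCLike.conj_mul, re_ofReal_mul]
  norm_cast

theorem re_inner_apply_self_nonneg_of_mem_spanSubfamily (hT : ∀ i, T (b i) = (μ i : 𝕜) • b i)
    {x : E} (hx : x ∈ b.spanSubfamily (fun i => ¬ μ i < 0)) : 0 ≤ re ⟪T x, x⟫_𝕜 := by
  rw [re_inner_apply_self_eq_sum hT]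
  refine Finset.sum_nonneg fun i _ => ?_
  by_cases hi : μ i < 0
  · simp [inner_eq_zero_of_mem_spanSubfamily hx (not_not.mpr hi)]
  · exact mul_nonneg (not_lt.mp hi) (sq_nonneg _)

theorem re_inner_apply_self_neg_of_mem_spanSubfamily (hT : ∀ i, T (b i) = (μ i : 𝕜) • b i)
    {x : E} (hx : x ∈ b.spanSubfamily (fun i => μ i < 0)) (hx₀ : x ≠ 0) : re ⟪T x, x⟫_𝕜 < 0 := by
  have hcoeff : ∀ i, μ i * ‖⟪b i, x⟫_𝕜‖ ^ 2 ≤ 0 := fun i => by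
    by_cases hi : μ i < 0
    · exact mul_nonpos_of_nonpos_of_nonneg hi.le (sq_nonneg _)
    · simp [inner_eq_zero_of_mem_spanSubfamily hx hi]
  obtain ⟨i, hi⟩ := b.exists_inner_ne_zero hx₀
  have hμi : μ i < 0 := by_contra fun h => hi (inner_eq_zero_of_mem_spanSubfamily hx h)
  rw [re_inner_apply_self_eq_sum hT]
  refine (Finset.sum_lt_sum (g := 0) (fun j _ => hcoeff j) ?_).trans_eq (by simp)
  exact ⟨i, Finset.mem_univ _, mul_neg_of_neg_of_pos hμi (by positivity)⟩

theorem finrank_le_card_neg_of_re_inner_apply_self_neg (hT : ∀ i, T (b i) = (μ i : 𝕜) • b i)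
    (W : Submodule 𝕜 E) (hW : ∀ x ∈ W, x ≠ 0 → re ⟪T x, x⟫_𝕜 < 0) :
    finrank 𝕜 W ≤ Fintype.card {i // μ i < 0} := by
  have := b.toBasis.finiteDimensional_of_finite
  set V := b.spanSubfamily (fun i => ¬ μ i < 0)
  have hWV : W ⊓ V = ⊥ := by
    refine (Submodule.eq_bot_iff _).mpr fun x ⟨hxW, hxV⟩ => by_contra fun hx₀ => ?_
    exact (hW x hxW hx₀).not_ge (re_inner_apply_self_nonneg_of_mem_spanSubfamily hT hxV)
  have hdim := Submodule.finrank_sup_add_finrank_inf_eq W V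
  rw [hWV, finrank_bot, finrank_spanSubfamily,
    Fintype.card_subtype_compl (fun i => μ i < 0)] at hdim
  have hsup : finrank 𝕜 ↥(W ⊔ V) ≤ Fintype.card ι :=
    (Submodule.finrank_le _).trans (finrank_eq_card_basis b.toBasis).le
  have : Fintype.card {i // μ i < 0} ≤ Fintype.card ι := Fintype.card_subtype_le _
  omega

end OrthonormalBasis

namespace LinearMap

variable {𝕜 E : Type*} [RCLike 𝕜] [NormedAddCommGroup E] [InnerProductSpace 𝕜 E]

theorem IsPositive.re_inner_apply_self_pos [FiniteDimensional 𝕜 E] {P : E →ₗ[𝕜] E}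
    (hP : P.IsPositive) {x : E} (hx : P x ≠ 0) : 0 < re ⟪P x, x⟫_𝕜 := by
  set b := hP.isSymmetric.eigenvectorBasis rfl
  have hPb := hP.isSymmetric.apply_eigenvectorBasis rfl
  obtain ⟨i, hi⟩ := b.exists_inner_ne_zero hx
  rw [OrthonormalBasis.inner_apply_of_apply_eq_smul hPb] at hi
  have hμi : 0 < hP.isSymmetric.eigenvalues rfl i :=
    (hP.nonneg_eigenvalues rfl i).lt_of_ne' fun h => hi (by simp [h])
  rw [OrthonormalBasis.re_inner_apply_self_eq_sum hPb]
  refine Finset.sum_pos' (fun j _ => mul_nonneg (hP.nonneg_eigenvalues rfl j) (sq_nonneg _))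
    ⟨i, Finset.mem_univ _, mul_pos hμi (by positivity [right_ne_zero_of_mul hi])⟩

open OrthonormalBasis in
theorem card_neg_lt_card_neg_of_isPositive_sub {ι κ : Type*} [Fintype ι] [Fintype κ]
    {T₁ T₂ : E →ₗ[𝕜] E} {b₁ : OrthonormalBasis ι 𝕜 E} {b₂ : OrthonormalBasis κ 𝕜 E}
    {μ₁ : ι → ℝ} {μ₂ : κ → ℝ} (hT₁ : ∀ i, T₁ (b₁ i) = (μ₁ i : 𝕜) • b₁ i)
    (hT₂ : ∀ i, T₂ (b₂ i) = (μ₂ i : 𝕜) • b₂ i) (hle : (T₂ - T₁).IsPositive)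
    {v : E} (hv₂ : T₂ v = 0) (hv₁ : T₁ v ≠ 0) :
    Fintype.card {i // μ₂ i < 0} < Fintype.card {i // μ₁ i < 0} := by
  have := b₁.toBasis.finiteDimensional_of_finite
  set N := b₂.spanSubfamily (fun i => μ₂ i < 0)
  have hv₀ : v ≠ 0 := by rintro rfl; simp at hv₁
  have hvN : v ∉ N := fun hv =>
    (re_inner_apply_self_neg_of_mem_spanSubfamily hT₂ hv hv₀).ne (by simp [hv₂])
  have hneg : ∀ x ∈ N ⊔ 𝕜 ∙ v, x ≠ 0 → re ⟪T₁ x, x⟫_𝕜 < 0 := by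
    intro x hx hx₀
    obtain ⟨u, hu, w, hw, rfl⟩ := Submodule.mem_sup.mp hx
    obtain ⟨t, rfl⟩ := Submodule.mem_span_singleton.mp hw
    have hsplit : re ⟪T₁ (u + t • v), u + t • v⟫_𝕜
        = re ⟪T₂ u, u⟫_𝕜 - re ⟪(T₂ - T₁) (u + t • v), u + t • v⟫_𝕜 := by
      have hT₂uv : ⟪T₂ u, v⟫_𝕜 = 0 := by
        rw [isSymmetric_of_apply_eq_smul hT₂, hv₂, inner_zero_right]
      have hT₂x : ⟪T₂ (u + t • v), u + t • v⟫_𝕜 = ⟪T₂ u, u⟫_𝕜 := by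
        simp [hv₂, inner_add_right, inner_smul_right, hT₂uv]
      rw [← hT₂x, sub_apply, inner_sub_left, map_sub, sub_sub_cancel]
    rw [hsplit]
    by_cases hu₀ : u = 0
    · subst hu₀
      have hPx : (T₂ - T₁) (0 + t • v) ≠ 0 := by
        have ht : t ≠ 0 := by rintro rfl; simp at hx₀
        simpa [hv₂, ht] using hv₁
      simpa using hle.re_inner_apply_self_pos hPx
    · exact sub_neg_of_lt ((re_inner_apply_self_neg_of_mem_spanSubfamily hT₂ hu hu₀).trans_le
        (hle.re_inner_nonneg_left _))
  have hdim := Submodule.finrank_sup_add_finrank_inf_eq N (𝕜 ∙ v)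
  rw [((Submodule.disjoint_span_singleton' hv₀).mpr hvN).eq_bot, finrank_bot,
    finrank_spanSubfamily, finrank_span_singleton hv₀] at hdim
  have := finrank_le_card_neg_of_re_inner_apply_self_neg hT₁ _ hneg
  omega

end LinearMap

theorem Matrix.IsHermitian.toEuclideanLin_eigenvectorBasis_s10 {𝕜 n : Type*} [RCLike 𝕜] [Fintype n]
    [DecidableEq n] {A : Matrix n n 𝕜} (hA : A.IsHermitian) (i : n) :
    toEuclideanLin A (hA.eigenvectorBasis i) = (hA.eigenvalues i : 𝕜) • hA.eigenvectorBasis i := by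
  rw [toLpLin_apply, hA.mulVec_eigenvectorBasis, RCLike.real_smul_eq_coe_smul (K := 𝕜)]
  rfl

theorem ker_subset_of_negCount_eq {n : ℕ} (H₁ H₂ : Matrix (Fin n) (Fin n) ℂ)
    (h1 : H₁.IsHermitian) (h2 : H₂.IsHermitian)
    (hle : (H₂ - H₁).PosSemidef)
    (hcount : negCount H₁ = negCount H₂) :
    ∀ v : Fin n → ℂ, H₂ *ᵥ v = 0 → H₁ *ᵥ v = 0 := by
  intro v hv
  by_contra hne
  rw [negCount, negCount, dif_pos h1, dif_pos h2] at hcount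
  have hle' : (toEuclideanLin H₂ - toEuclideanLin H₁).IsPositive := by
    rw [← map_sub]
    exact isPositive_toEuclideanLin_iff.mpr hle
  have hlt := LinearMap.card_neg_lt_card_neg_of_isPositive_sub
    h1.toEuclideanLin_eigenvectorBasis_s10 h2.toEuclideanLin_eigenvectorBasis_s10 hle'
    (v := WithLp.toLp 2 v) (by simp [hv]) (by simpa using hne)
  omega
end

section
/- Let H₁ and H₂ be Hermitian n×n complex matrices with H₁ ≤ H₂, let E₁ and E₂ be their spectral projections onto (-∞, 0), and suppose rank E₁ < ∞ (automatic here). Then the restriction of E₁ to the range of E₂ is injective. -/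
open Matrix ComplexOrder

/-!
Write `q(x) = re ⟪H x, x⟫`. Expanding `x` in an eigenbasis of `H` gives `q(x) = ∑ λᵢ ‖xᵢ‖²`.
If `E₁ v = 0`, only the nonnegative eigenvalues of `H₁` contribute, so `q₁(v) ≥ 0`; if
`v ∈ ran E₂`, only the negative eigenvalues of `H₂` contribute. Then `H₁ ≤ H₂` gives
`0 ≤ q₁(v) ≤ q₂(v) = ∑_{λᵢ < 0} λᵢ ‖vᵢ‖² ≤ 0`, which forces every coordinate of `v` to vanish.
-/

open RCLike
open scoped InnerProductSpace

namespace OrthonormalBasis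

variable {𝕜 E ι : Type*} [RCLike 𝕜] [NormedAddCommGroup E] [InnerProductSpace 𝕜 E]
  [Fintype ι] (b : OrthonormalBasis ι 𝕜 E)

theorem repr_eq_zero_of_mem_span_image {s : Set ι} {x : E} (hx : x ∈ Submodule.span 𝕜 (b '' s))
    {i : ι} (hi : i ∉ s) : b.repr x i = 0 := by
  have hle : Submodule.span 𝕜 (b '' s) ≤ LinearMap.ker (innerₛₗ 𝕜 (b i)) := by
    rw [Submodule.span_le]
    rintro _ ⟨j, hj, rfl⟩
    exact b.orthonormal.2 fun hij => hi (hij ▸ hj)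
  rw [b.repr_apply_apply]
  exact hle hx

theorem repr_eq_zero_of_mem_orthogonal_span_image {s : Set ι} {x : E}
    (hx : x ∈ (Submodule.span 𝕜 (b '' s))ᗮ) {i : ι} (hi : i ∈ s) : b.repr x i = 0 := by
  rw [b.repr_apply_apply]
  exact Submodule.inner_right_of_mem_orthogonal
    (Submodule.subset_span (Set.mem_image_of_mem b hi)) hx

variable {T : E →ₗ[𝕜] E} {μ : ι → ℝ} {b}

theorem repr_map_eq_mul_of_eigenbasis (hb : ∀ i, T (b i) = (μ i : 𝕜) • b i) (x : E) (i : ι) :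
    b.repr (T x) i = μ i * b.repr x i := by
  classical
  conv_lhs => rw [← b.sum_repr x]
  simp [hb, b.repr_self, Pi.single_apply, real_smul_eq_coe_mul, mul_comm]

theorem re_inner_map_self_eq_sum (hb : ∀ i, T (b i) = (μ i : 𝕜) • b i) (x : E) :
    re ⟪T x, x⟫_𝕜 = ∑ i, μ i * ‖b.repr x i‖ ^ 2 := by
  rw [← b.repr.inner_map_map, PiLp.inner_apply, map_sum]
  refine Finset.sum_congr rfl fun i _ => ?_
  rw [repr_map_eq_mul_of_eigenbasis hb, ← smul_eq_mul, inner_smul_real_left,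
    inner_self_eq_norm_sq_to_K, ← ofReal_pow, smul_re, ofReal_re]

theorem re_inner_map_self_nonneg_of_mem_orthogonal (hb : ∀ i, T (b i) = (μ i : 𝕜) • b i) {x : E}
    (hx : x ∈ (Submodule.span 𝕜 (b '' {i | μ i < 0}))ᗮ) : 0 ≤ re ⟪T x, x⟫_𝕜 := by
  rw [re_inner_map_self_eq_sum hb]
  refine Finset.sum_nonneg fun i _ => ?_
  by_cases hi : μ i < 0
  · simp [b.repr_eq_zero_of_mem_orthogonal_span_image hx hi]
  · exact mul_nonneg (not_lt.1 hi) (sq_nonneg _)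

theorem eq_zero_of_mem_span_of_re_inner_map_self_nonneg (hb : ∀ i, T (b i) = (μ i : 𝕜) • b i)
    {x : E} (hx : x ∈ Submodule.span 𝕜 (b '' {i | μ i < 0})) (hT : 0 ≤ re ⟪T x, x⟫_𝕜) :
    x = 0 := by
  have hterm : ∀ i ∈ Finset.univ, μ i * ‖b.repr x i‖ ^ 2 ≤ 0 := fun i _ => by
    by_cases hi : μ i < 0
    · exact mul_nonpos_of_nonpos_of_nonneg hi.le (sq_nonneg _)
    · simp [b.repr_eq_zero_of_mem_span_image hx hi]
  rw [re_inner_map_self_eq_sum hb] at hT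
  have hzero := (Finset.sum_eq_zero_iff_of_nonpos hterm).1
    (le_antisymm (Finset.sum_nonpos hterm) hT)
  rw [← b.repr.map_eq_zero_iff]
  ext i
  by_cases hi : μ i < 0
  · simpa [hi.ne] using hzero i (Finset.mem_univ i)
  · exact b.repr_eq_zero_of_mem_span_image hx hi

end OrthonormalBasis

namespace Matrix

variable {𝕜 n : Type*} [RCLike 𝕜] [Fintype n] [DecidableEq n]

theorem IsHermitian.toEuclideanLin_eigenvectorBasis_s19 {A : Matrix n n 𝕜} (hA : A.IsHermitian)
    (i : n) :
    toEuclideanLin A (hA.eigenvectorBasis i) = (hA.eigenvalues i : 𝕜) • hA.eigenvectorBasis i := by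
  ext j
  simp [hA.mulVec_eigenvectorBasis, real_smul_eq_coe_mul]

theorem re_inner_toEuclideanLin_le_of_posSemidef_sub {A B : Matrix n n 𝕜}
    (h : (B - A).PosSemidef) (x : EuclideanSpace 𝕜 n) :
    re ⟪toEuclideanLin A x, x⟫_𝕜 ≤ re ⟪toEuclideanLin B x, x⟫_𝕜 := by
  have := (isPositive_toEuclideanLin_iff.2 h).2 x
  rwa [map_sub, LinearMap.sub_apply, inner_sub_left, map_sub, sub_nonneg] at this

end Matrix

theorem eigSpan_eq_span_image {n : ℕ} {A : Matrix (Fin n) (Fin n) ℂ} (hA : A.IsHermitian)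
    (P : ℝ → Prop) :
    eigSpan hA P = Submodule.span ℂ (hA.eigenvectorBasis '' {i | P (hA.eigenvalues i)}) := by
  unfold eigSpan
  congr 1
  ext w
  simp [eq_comm]

theorem spectral_projection_injective_on {n : ℕ} (H₁ H₂ : Matrix (Fin n) (Fin n) ℂ)
    (h1 : H₁.IsHermitian) (h2 : H₂.IsHermitian)
    (hle : (H₂ - H₁).PosSemidef)
    (v : EuclideanSpace ℂ (Fin n))
    (hv2 : v ∈ eigSpan h2 (fun t => t < 0))
    (hv1 : Submodule.orthogonalProjectionOnto (eigSpan h1 (fun t => t < 0)) v = 0) :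
    v = 0 := by
  rw [eigSpan_eq_span_image] at hv1 hv2
  rw [Submodule.orthogonalProjectionOnto_eq_zero_iff] at hv1
  have hq₁ : 0 ≤ re ⟪toEuclideanLin H₁ v, v⟫_ℂ :=
    OrthonormalBasis.re_inner_map_self_nonneg_of_mem_orthogonal
      h1.toEuclideanLin_eigenvectorBasis_s19 hv1
  exact OrthonormalBasis.eq_zero_of_mem_span_of_re_inner_map_self_nonneg
    h2.toEuclideanLin_eigenvectorBasis_s19 hv2
    (hq₁.trans (re_inner_toEuclideanLin_le_of_posSemidef_sub hle v))
end
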